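/- arXiv:1110.6424 — 2 statements merged into one kernel-verified Lean document; each statement's English description precedes it below -/
import Mathlib

section
/- Let w = t_v σ ∈ W̃_{D_m} and j ∈ {1,…,2m}. Then exactly one of the following three possibilities holds: (1) σ(j) = j, and k ↦ ν_k^w(j) is constant as k varies in 0 ≤ k ≤ m; (2) σ(j) = j*, the set of values of ν_k^w(j) for 0 ≤ k ≤ m is exactly {u(j), u(j)−1}, and there is exactly one k with 1 ≤ k ≤ m such that ν_k^w(j) ≠ ν_{k−1}^w(j), namely k = min{j, j*}; (3) σ(j) ∉ {j, j*}, ν_k^w(j) = u(j) − 1/2 for some k with 0 ≤ k ≤ m, there are exactly two values of k with 1 ≤ k ≤ m such that ν_k^w(j) ≠ ν_{k−1}^w(j), namely k = min{j, j*} and k = min{σ⁻¹(j), σ⁻¹(j)*}, and for each such k, |ν_k^w(j) − ν_{k−1}^w(j)| = 1/2. -/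
open Finset

namespace TypeD

abbrev VecZ (m : ℕ) := Fin (2 * m) → ℤ
abbrev VecR (m : ℕ) := Fin (2 * m) → ℝ

/-- `σ ∈ S_{2m}^∘`: even, and commuting with `j ↦ j*`. -/
def InSO (m : ℕ) (σ : Equiv.Perm (Fin (2 * m))) : Prop :=
  Equiv.Perm.sign σ = 1 ∧ ∀ j, σ j.rev = (σ j).rev

/-- `t ∈ X_{*D_m}`. -/
def InXD (m : ℕ) (t : VecZ m) : Prop :=
  ∀ j j' : Fin (2 * m), t j + t j.rev = t j' + t j'.rev

/-- `ω_i ∈ ℤ^{2m}`: writing `i = 2m·b + c` with `0 ≤ c < 2m`, the first `c` entries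
are `-b-1` and the rest are `-b`. -/
def omegaD (m : ℕ) (i : ℤ) (j : Fin (2 * m)) : ℤ :=
  if ((j : ℕ) : ℤ) < i % (2 * (m : ℤ)) then -(i / (2 * (m : ℤ))) - 1
  else -(i / (2 * (m : ℤ)))

/-- `μ_k^w = w·ω_k − ω_k` for `w = t_t σ`. -/
def muD (m : ℕ) (t : VecZ m) (σ : Equiv.Perm (Fin (2 * m))) (k : ℤ) (j : Fin (2 * m)) : ℤ :=
  t j + omegaD m k (σ⁻¹ j) - omegaD m k j

/-- `ν_k^w = (μ_k^w + μ_{−k}^w)/2`, real-valued. -/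
noncomputable def nuD (m : ℕ) (t : VecZ m) (σ : Equiv.Perm (Fin (2 * m))) (k : ℤ) (j : Fin (2 * m)) : ℝ :=
  ((muD m t σ k j + muD m t σ (-k) j : ℤ) : ℝ) / 2

/-- `c_k^w = #{j : μ_k^w(j) = 2}`. -/
noncomputable def cD (m : ℕ) (t : VecZ m) (σ : Equiv.Perm (Fin (2 * m))) (k : ℤ) : ℕ :=
  Set.ncard {j : Fin (2 * m) | muD m t σ k j = 2}

/-- the cocharacter `μ = (2^{(q)}, 1^{(2m−2q)}, 0^{(q)})`. -/
def muQ (m q : ℕ) (j : Fin (2 * m)) : ℤ :=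
  if (j : ℕ) < q then 2 else if (j : ℕ) < 2 * m - q then 1 else 0

/-- the coroot lattice `Q∨_{D_m}`. -/
def QveeD (m : ℕ) : Set (VecZ m) :=
  {x | (∀ j, x j + x j.rev = 0) ∧
    Even (∑ j ∈ Finset.univ.filter (fun j : Fin (2 * m) => (j : ℕ) < m), x j)}

/-- `j ∈ A_a` (1-indexed `{1,…,a} ∪ {2m+1−a,…,2m}`). -/
def memA (m a : ℕ) (j : Fin (2 * m)) : Prop := (j : ℕ) < a ∨ 2 * m - a ≤ (j : ℕ)

/-- `j ∈ B_a` (1-indexed `{a+1,…,2m−a}`). -/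
def memB (m a : ℕ) (j : Fin (2 * m)) : Prop := a ≤ (j : ℕ) ∧ (j : ℕ) < 2 * m - a

def IsIntVal (x : ℝ) : Prop := ∃ z : ℤ, x = (z : ℝ)

/-- a half-integer: an element of `(1/2)ℤ ∖ ℤ`. -/
def IsHalfInt (x : ℝ) : Prop := (∃ z : ℤ, x = (z : ℝ) / 2) ∧ ¬ IsIntVal x

/-- `μ_k^w` is self-dual, i.e. `μ_k^w = μ_{−k}^w`. -/
def SelfDual (m : ℕ) (t : VecZ m) (σ : Equiv.Perm (Fin (2 * m))) (k : ℤ) : Prop :=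
  ∀ j, muD m t σ k j = muD m t σ (-k) j

/-- (SP1) at `k`. -/
def SP1 (m : ℕ) (t : VecZ m) (σ : Equiv.Perm (Fin (2 * m))) (k : ℤ) : Prop :=
  (∀ j, muD m t σ k j + muD m t σ (-k) j.rev = 2) ∧
  (∀ j, 0 ≤ muD m t σ k j ∧ muD m t σ k j ≤ 2)

/-- (SP2) at `k`. -/
def SP2 (m q : ℕ) (t : VecZ m) (σ : Equiv.Perm (Fin (2 * m))) (k : ℤ) : Prop :=
  cD m t σ k ≤ q

/-- (SP3) at `k`. -/
def SP3 (m q : ℕ) (t : VecZ m) (σ : Equiv.Perm (Fin (2 * m))) (k : ℕ) : Prop :=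
  (SelfDual m t σ (k : ℤ) ∧ (fun j => muD m t σ (k : ℤ) j - muQ m q j) ∉ QveeD m) →
    ∃ j₁ j₂ : Fin (2 * m), memA m k j₁ ∧ memB m k j₂ ∧
      muD m t σ (k : ℤ) j₁ = 1 ∧ muD m t σ (k : ℤ) j₂ = 1

/-- (SP1') at `k`. -/
def SP1' (m : ℕ) (t : VecZ m) (σ : Equiv.Perm (Fin (2 * m))) (k : ℤ) : Prop :=
  (∀ j, nuD m t σ k j + nuD m t σ k j.rev = 2) ∧
  (∀ j, 0 ≤ nuD m t σ k j ∧ nuD m t σ k j ≤ 2)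

/-- (SP2') at `k`. -/
def SP2' (m q : ℕ) (t : VecZ m) (σ : Equiv.Perm (Fin (2 * m))) (k : ℤ) : Prop :=
  (Set.ncard {j : Fin (2 * m) | nuD m t σ k j = 2} : ℝ) +
    (Set.ncard {j : Fin (2 * m) | ¬ IsIntVal (nuD m t σ k j)} : ℝ) / 4 ≤ (q : ℝ)

/-- `ν_k^w − μ ∈ Q∨_{D_m}`. -/
def NuCongQvee (m q : ℕ) (t : VecZ m) (σ : Equiv.Perm (Fin (2 * m))) (k : ℤ) : Prop :=
  ∃ y ∈ QveeD m, ∀ j, nuD m t σ k j = ((muQ m q j + y j : ℤ) : ℝ)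

/-- (SP3') at `k`. -/
def SP3' (m q : ℕ) (t : VecZ m) (σ : Equiv.Perm (Fin (2 * m))) (k : ℕ) : Prop :=
  ((∀ j, IsIntVal (nuD m t σ (k : ℤ) j)) ∧ ¬ NuCongQvee m q t σ (k : ℤ)) →
    ∃ j₁ j₂ : Fin (2 * m), memA m k j₁ ∧ memB m k j₂ ∧
      nuD m t σ (k : ℤ) j₁ = 1 ∧ nuD m t σ (k : ℤ) j₂ = 1

/-- the orbit `S_{2m}^∘ · μ` inside `ℝ^{2m}`. -/
def OrbitMu (m q : ℕ) : Set (VecR m) :=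
  {x | ∃ σ : Equiv.Perm (Fin (2 * m)), InSO m σ ∧ ∀ j, x j = ((muQ m q (σ⁻¹ j) : ℤ) : ℝ)}

/-- `Conv(S_{2m}^∘ · μ)`. -/
def ConvMu (m q : ℕ) : Set (VecR m) := convexHull ℝ (OrbitMu m q)

/-- the affine action of `w = t_t σ` on `ℝ^{2m}`. -/
noncomputable def actR (m : ℕ) (t : VecZ m) (σ : Equiv.Perm (Fin (2 * m))) (x : VecR m) (j : Fin (2 * m)) : ℝ :=
  (t j : ℝ) + x (σ⁻¹ j)

/-- the point `a_k = ((−1/2)^{(k)}, 0^{(2m−2k)}, (1/2)^{(k)})`. -/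
noncomputable def aD (m k : ℕ) (j : Fin (2 * m)) : ℝ :=
  if (j : ℕ) < k then -(1 / 2) else if (j : ℕ) < 2 * m - k then 0 else 1 / 2

/-- the point `a_{0'} = (−1, 0^{(2m−2)}, 1)`. -/
noncomputable def a0' (m : ℕ) (j : Fin (2 * m)) : ℝ :=
  if (j : ℕ) = 0 then -1 else if (j : ℕ) = 2 * m - 1 then 1 else 0

/-- the point `a_{m'} = ((−1/2)^{(m−1)}, 1/2, −1/2, (1/2)^{(m−1)})`. -/
noncomputable def am' (m : ℕ) (j : Fin (2 * m)) : ℝ :=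
  if (j : ℕ) < m - 1 then -(1 / 2)
  else if (j : ℕ) = m - 1 then 1 / 2
  else if (j : ℕ) = m then -(1 / 2)
  else 1 / 2

/-- `ν_{0'}^w = w·a_{0'} − a_{0'}`. -/
noncomputable def nu0' (m : ℕ) (t : VecZ m) (σ : Equiv.Perm (Fin (2 * m))) (j : Fin (2 * m)) : ℝ :=
  actR m t σ (a0' m) j - a0' m j

/-- `ν_{m'}^w = w·a_{m'} − a_{m'}`. -/
noncomputable def num' (m : ℕ) (t : VecZ m) (σ : Equiv.Perm (Fin (2 * m))) (j : Fin (2 * m)) : ℝ :=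
  actR m t σ (am' m) j - am' m j

/-- membership in the real apartment `{x : x(1)+x(2m) = ⋯ = x(m)+x(m+1)}`. -/
def InApartR (m : ℕ) (x : VecR m) : Prop :=
  ∀ j j' : Fin (2 * m), x j + x j.rev = x j' + x j'.rev

/-- membership in the base alcove `A_{D_m}`. -/
def InAlcove (m : ℕ) (x : VecR m) : Prop :=
  InApartR m x ∧
  (∀ j0 jt : Fin (2 * m), (j0 : ℕ) = 0 → 1 ≤ (jt : ℕ) → (jt : ℕ) ≤ m →
    x j0 < x jt ∧ x j0.rev - 1 < x jt) ∧
  (∀ j j' : Fin (2 * m), 1 ≤ (j : ℕ) → (j : ℕ) ≤ m - 2 → (j : ℕ) < (j' : ℕ) →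
    (j' : ℕ) ≤ m → x j < x j')

/-- `w = t_t σ` is μ-permissible: `w ≡ t_μ mod W_{aff}` (equivalently
`ν_0^w − μ ∈ Q∨_{D_m}`) and `w·x − x ∈ Conv(S_{2m}^∘ μ)` for all `x` in the base alcove. -/
def MuPermissible (m q : ℕ) (t : VecZ m) (σ : Equiv.Perm (Fin (2 * m))) : Prop :=
  NuCongQvee m q t σ 0 ∧
  ∀ x : VecR m, InAlcove m x → (fun j => actR m t σ x j - x j) ∈ ConvMu m q

/-- the coroot `α∨_{i,j} = e_i − e_j + e_{j*} − e_{i*}`. -/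
def corootD (m : ℕ) (i j l : Fin (2 * m)) : ℤ :=
  (if l = i then 1 else 0) - (if l = j then 1 else 0) +
    (if l = j.rev then 1 else 0) - (if l = i.rev then 1 else 0)

/-- `(t', σ')` represents `s_{α̃_{i,j;d}} · w` for `w = t_t σ`: on the apartment it
acts by `x ↦ w·x − ⟨α̃_{i,j;d}, w·x⟩ α∨_{i,j}`. -/
def IsReflOf (m : ℕ) (i j : Fin (2 * m)) (d : ℤ) (t : VecZ m) (σ : Equiv.Perm (Fin (2 * m)))
    (t' : VecZ m) (σ' : Equiv.Perm (Fin (2 * m))) : Prop :=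
  ∀ x : VecR m, InApartR m x → ∀ l,
    actR m t' σ' x l =
      actR m t σ x l - (actR m t σ x i - actR m t σ x j - (d : ℝ)) * (corootD m i j l : ℝ)

/-- Membership of `i` in `2mℤ ± I`. -/
def FaceIdxD (m : ℕ) (I : Finset ℕ) (i : ℤ) : Prop :=
  ∃ a ∈ I, ∃ b : ℤ, i = 2 * (m : ℤ) * b + (a : ℤ) ∨ i = 2 * (m : ℤ) * b - (a : ℤ)

/-- `v` is a `d`-face of type `(2m, I)`. -/
structure IsFaceD (m : ℕ) (I : Finset ℕ) (d : ℤ) (v : ℤ → VecZ m) : Prop where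
  per : ∀ i, FaceIdxD m I i → ∀ j, v (i + 2 * (m : ℤ)) j = v i j - 1
  mono : ∀ i i', FaceIdxD m I i → FaceIdxD m I i' → i ≤ i' → ∀ j, v i' j ≤ v i j
  sumEq : ∀ i i', FaceIdxD m I i → FaceIdxD m I i' → (∑ j, v i j) - (∑ j, v i' j) = i' - i
  dual : ∀ i, FaceIdxD m I i → ∀ j, v i j + v (-i) j.rev = d

/-- `μ_i^v := v_i − ω_i` for a face `v`. -/
def muFaceD (m : ℕ) (v : ℤ → VecZ m) (i : ℤ) (j : Fin (2 * m)) : ℤ := v i j - omegaD m i j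

/-- `ε` of a translation vector: the sum of the first `m` entries mod 2. -/
def epsVec (m : ℕ) (x : VecZ m) : ZMod 2 :=
  ((∑ j ∈ Finset.univ.filter (fun j : Fin (2 * m) => (j : ℕ) < m), x j : ℤ) : ZMod 2)

/-- membership of `(v, γ)` in `F_{I,D_m}`. -/
def MemFD (m : ℕ) (I : Finset ℕ) (v : ℤ → VecZ m) (γ : ZMod 2) : Prop :=
  (∃ d, IsFaceD m I d v) ∧
  (if 0 ∈ I then
    if m ∈ I then
      (fun j => muFaceD m v 0 j - muFaceD m v (m : ℤ) j) ∈ QveeD m ∧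
        γ = epsVec m (fun j => muFaceD m v 0 j)
    else γ = epsVec m (fun j => muFaceD m v 0 j)
  else if m ∈ I then γ = epsVec m (fun j => muFaceD m v (m : ℤ) j)
  else True)

/-- membership of `t_tx σx` in `W_{I,D_m}` (the group conditions on `(tx, σx)` being
assumed separately): it lies in `W_{aff,D_m}` and fixes `a_k` for all `k ∈ I`. -/
def MemWI (m : ℕ) (I : Finset ℕ) (tx : VecZ m) (σx : Equiv.Perm (Fin (2 * m))) : Prop :=
  tx ∈ QveeD m ∧ ∀ k ∈ I, ∀ j, (tx j : ℝ) + aD m k (σx⁻¹ j) = aD m k j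

/-- (SP1) at `k` for a face. -/
def SP1F (m : ℕ) (v : ℤ → VecZ m) (k : ℕ) : Prop :=
  (∀ j, muFaceD m v (k : ℤ) j + muFaceD m v (-(k : ℤ)) j.rev = 2) ∧
  (∀ j, 0 ≤ muFaceD m v (k : ℤ) j ∧ muFaceD m v (k : ℤ) j ≤ 2)

/-- (SP2) at `k` for a face. -/
def SP2F (m q : ℕ) (v : ℤ → VecZ m) (k : ℕ) : Prop :=
  Set.ncard {j : Fin (2 * m) | muFaceD m v (k : ℤ) j = 2} ≤ q

/-- (SP3) at `k` for a face. -/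
def SP3F (m q : ℕ) (v : ℤ → VecZ m) (k : ℕ) : Prop :=
  ((∀ j, muFaceD m v (k : ℤ) j = muFaceD m v (-(k : ℤ)) j) ∧
      (fun j => muFaceD m v (k : ℤ) j - muQ m q j) ∉ QveeD m) →
    ∃ j₁ j₂ : Fin (2 * m), memA m k j₁ ∧ memB m k j₂ ∧
      muFaceD m v (k : ℤ) j₁ = 1 ∧ muFaceD m v (k : ℤ) j₂ = 1

/-- `(v, γ) ∈ F_{I,D_m}` is μ-spin-permissible. -/
def SpinPermF (m q : ℕ) (I : Finset ℕ) (v : ℤ → VecZ m) (γ : ZMod 2) : Prop :=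
  γ = epsVec m (fun j => muQ m q j) ∧ ∀ k ∈ I, SP1F m v k ∧ SP2F m q v k ∧ SP3F m q v k

/-- Possibility (1): `j` is not proper. -/
def Case1 (m : ℕ) (t : VecZ m) (σ : Equiv.Perm (Fin (2 * m))) (j : Fin (2 * m)) : Prop :=
  σ j = j ∧ ∀ k k' : ℕ, k ≤ m → k' ≤ m → nuD m t σ (k : ℤ) j = nuD m t σ (k' : ℤ) j

/-- Possibility (2): `σ(j) = j*`. -/
def Case2 (m : ℕ) (t : VecZ m) (σ : Equiv.Perm (Fin (2 * m))) (u : Fin (2 * m) → ℤ)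
    (j : Fin (2 * m)) : Prop :=
  σ j = j.rev ∧
  {x : ℝ | ∃ k : ℕ, k ≤ m ∧ x = nuD m t σ (k : ℤ) j} = {(u j : ℝ), (u j : ℝ) - 1} ∧
  ∀ k : ℕ, 1 ≤ k → k ≤ m →
    (nuD m t σ (k : ℤ) j ≠ nuD m t σ ((k : ℤ) - 1) j ↔
      k = min ((j : ℕ) + 1) ((j.rev : ℕ) + 1))

/-- Possibility (3): `σ(j) ∉ {j, j*}`. -/
def Case3 (m : ℕ) (t : VecZ m) (σ : Equiv.Perm (Fin (2 * m))) (u : Fin (2 * m) → ℤ)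
    (j : Fin (2 * m)) : Prop :=
  σ j ≠ j ∧ σ j ≠ j.rev ∧
  (∃ k : ℕ, k ≤ m ∧ nuD m t σ (k : ℤ) j = (u j : ℝ) - 1 / 2) ∧
  min ((j : ℕ) + 1) ((j.rev : ℕ) + 1) ≠
    min (((σ⁻¹ j : Fin (2 * m)) : ℕ) + 1) ((((σ⁻¹ j).rev : Fin (2 * m)) : ℕ) + 1) ∧
  (∀ k : ℕ, 1 ≤ k → k ≤ m →
    (nuD m t σ (k : ℤ) j ≠ nuD m t σ ((k : ℤ) - 1) j ↔
      (k = min ((j : ℕ) + 1) ((j.rev : ℕ) + 1) ∨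
        k = min (((σ⁻¹ j : Fin (2 * m)) : ℕ) + 1)
          ((((σ⁻¹ j).rev : Fin (2 * m)) : ℕ) + 1)))) ∧
  (∀ k : ℕ, 1 ≤ k → k ≤ m → nuD m t σ (k : ℤ) j ≠ nuD m t σ ((k : ℤ) - 1) j →
    |nuD m t σ (k : ℤ) j - nuD m t σ ((k : ℤ) - 1) j| = 1 / 2)

/-!
For `0 ≤ k ≤ m` one has `ω_k + ω_{-k} = 2 a_k`, so `ν_k^w(j) = v(j) + a_k(σ⁻¹ j) - a_k(j)`.
As `k` runs from `0` to `m`, `a_k(x)` is a step function of `k`: it is `0` for `k < min {x, x*}`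
and `∓1/2` (according to whether `x ≤ m`) from then on. Hence `ν_k^w(j)` is constant if
`σ⁻¹ j = j`, has one jump of size `1` if `σ⁻¹ j = j*` (the two steps then coincide with opposite
signs), and otherwise has two jumps of size `1/2` at the distinct places `min {j, j*}` and
`min {σ⁻¹ j, σ⁻¹ j*}`. Finally `u(j) = v(j) + [j < σ⁻¹ j]`, attained at `l = j`.
-/

variable {m : ℕ}

lemma omegaD_natCast {l : ℕ} (hl : l ≤ 2 * m) (x : Fin (2 * m)) :
    omegaD m l x = if (x : ℕ) < l then -1 else 0 := by
  have hx := x.isLt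
  unfold omegaD
  rcases hl.lt_or_eq with hl | rfl
  · rw [Int.emod_eq_of_lt (by omega) (by omega), Int.ediv_eq_zero_of_lt (by omega) (by omega)]
    split_ifs <;> omega
  · push_cast
    rw [Int.emod_self, Int.ediv_self (by omega)]
    split_ifs <;> omega

lemma omegaD_neg_natCast {k : ℕ} (hk : k ≤ 2 * m) (x : Fin (2 * m)) :
    omegaD m (-k) x = if 2 * m - k ≤ (x : ℕ) then 1 else 0 := by
  have hx := x.isLt
  rcases Nat.eq_zero_or_pos k with rfl | hk0
  · rw [Int.natCast_zero, neg_zero, ← Int.natCast_zero, omegaD_natCast (Nat.zero_le _)]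
    split_ifs <;> omega
  have hshift : -(k : ℤ) = (2 * m - k) + 2 * m * (-1) := by ring
  unfold omegaD
  rw [hshift, Int.add_mul_emod_self_left, Int.add_mul_ediv_left _ _ (by omega),
    Int.emod_eq_of_lt (by omega) (by omega), Int.ediv_eq_zero_of_lt (by omega) (by omega)]
  split_ifs <;> omega

/-- `min {x, x*}`, for the 1-indexed position `x + 1` of `x`. -/
def depth (x : Fin (2 * m)) : ℕ := min ((x : ℕ) + 1) ((x.rev : ℕ) + 1)

def side (x : Fin (2 * m)) : ℤ := if (x : ℕ) < m then -1 else 1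

/-- For `k ≤ m` this is `2 a_k(x)`. -/
def stepD (k : ℕ) (x : Fin (2 * m)) : ℤ := if depth x ≤ k then side x else 0

lemma rev_ne_self (x : Fin (2 * m)) : x.rev ≠ x := by
  simp only [ne_eq, Fin.ext_iff, Fin.val_rev]
  omega

lemma depth_rev (x : Fin (2 * m)) : depth x.rev = depth x := by
  simp only [depth, Fin.rev_rev, min_comm]

lemma depth_eq_depth_iff {x y : Fin (2 * m)} : depth x = depth y ↔ x = y ∨ x = y.rev := by
  simp only [depth, Fin.ext_iff, Fin.val_rev]
  omega

lemma depth_le (x : Fin (2 * m)) : depth x ≤ m := by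
  have hx := x.isLt
  simp only [depth, Fin.val_rev]
  omega

lemma side_rev (x : Fin (2 * m)) : side x.rev = -side x := by
  have hx := x.isLt
  simp only [side, Fin.val_rev]
  split_ifs <;> omega

lemma stepD_zero (x : Fin (2 * m)) : stepD 0 x = 0 := by
  simp [stepD, depth]

lemma stepD_self (x : Fin (2 * m)) : stepD m x = side x :=
  if_pos (depth_le x)

lemma stepD_rev (k : ℕ) (x : Fin (2 * m)) : stepD k x.rev = -stepD k x := by
  simp only [stepD, depth_rev, side_rev]
  split_ifs <;> simp

lemma stepD_sub_stepD_pred {k : ℕ} (hk : 1 ≤ k) (x : Fin (2 * m)) :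
    stepD k x - stepD (k - 1) x = if depth x = k then side x else 0 := by
  simp only [stepD]
  split_ifs <;> omega

lemma omegaD_add_omegaD_neg {k : ℕ} (hk : k ≤ m) (x : Fin (2 * m)) :
    omegaD m k x + omegaD m (-k) x = stepD k x := by
  have hx := x.isLt
  rw [omegaD_natCast (by omega), omegaD_neg_natCast (by omega)]
  simp only [stepD, side, depth, Fin.val_rev]
  split_ifs <;> omega

lemma inv_apply_eq_rev_iff {n : ℕ} {σ : Equiv.Perm (Fin n)} (hσ : ∀ x, σ x.rev = (σ x).rev)
    (j : Fin n) : σ⁻¹ j = j.rev ↔ σ j = j.rev := by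
  rw [Equiv.Perm.inv_eq_iff_eq, hσ, eq_comm, Fin.rev_eq_iff]

section Entry

variable {t : VecZ m} {σ : Equiv.Perm (Fin (2 * m))} {j : Fin (2 * m)}

lemma isGreatest_muD : IsGreatest {x : ℤ | ∃ l : ℕ, l ≤ 2 * m ∧ x = muD m t σ l j}
    (t j + if (j : ℕ) < σ⁻¹ j then 1 else 0) := by
  have hj := j.isLt
  refine ⟨⟨(j : ℕ) + 1, by omega, ?_⟩, ?_⟩
  · rw [muD, omegaD_natCast (by omega), omegaD_natCast (by omega)]
    split_ifs <;> omega
  · rintro x ⟨l, hl, rfl⟩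
    rw [muD, omegaD_natCast hl, omegaD_natCast hl]
    split_ifs <;> omega

lemma nuD_eq {k : ℕ} (hk : k ≤ m) :
    nuD m t σ k j = t j + ((stepD k (σ⁻¹ j) : ℝ) - stepD k j) / 2 := by
  have hsum : muD m t σ k j + muD m t σ (-k) j = 2 * t j + stepD k (σ⁻¹ j) - stepD k j := by
    simp only [muD]
    linarith [omegaD_add_omegaD_neg hk (σ⁻¹ j), omegaD_add_omegaD_neg hk j]
  rw [nuD, hsum]
  push_cast
  ring

lemma nuD_sub_nuD_pred {k : ℕ} (hk1 : 1 ≤ k) (hk : k ≤ m) :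
    nuD m t σ k j - nuD m t σ ((k : ℤ) - 1) j =
      (((if depth (σ⁻¹ j) = k then side (σ⁻¹ j) else 0) -
        (if depth j = k then side j else 0) : ℤ) : ℝ) / 2 := by
  rw [show (k : ℤ) - 1 = ((k - 1 : ℕ) : ℤ) by omega, nuD_eq hk, nuD_eq (by omega),
    ← stepD_sub_stepD_pred hk1, ← stepD_sub_stepD_pred hk1]
  push_cast
  ring

lemma nuD_eq_of_apply_eq_self (h : σ j = j) {k : ℕ} (hk : k ≤ m) : nuD m t σ k j = t j := by
  rw [nuD_eq hk, Equiv.Perm.inv_eq_iff_eq.2 h.symm, sub_self, zero_div, add_zero]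

variable {u : Fin (2 * m) → ℤ}

lemma case2_of_apply_eq_rev (hσ : ∀ x, σ x.rev = (σ x).rev)
    (hu : u j = t j + if (j : ℕ) < σ⁻¹ j then 1 else 0) (h : σ j = j.rev) :
    Case2 m t σ u j := by
  have hj := j.isLt
  have hs : σ⁻¹ j = j.rev := (inv_apply_eq_rev_iff hσ j).2 h
  have hν : ∀ k ≤ m, nuD m t σ k j = ((t j - stepD k j : ℤ) : ℝ) := fun k hk => by
    rw [nuD_eq hk, hs, stepD_rev]
    push_cast
    ring
  have huj : u j = t j + if (j : ℕ) < m then 1 else 0 := by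
    rw [hu, hs, Fin.val_rev]
    split_ifs <;> omega
  refine ⟨h, ?_, fun k hk1 hk => ?_⟩
  · ext x
    simp only [Set.mem_ofPred_eq, Set.mem_insert_iff, Set.mem_singleton_iff]
    constructor
    · rintro ⟨k, hk, rfl⟩
      have hval : t j - stepD k j = u j ∨ t j - stepD k j = u j - 1 := by
        simp only [huj, stepD, side]
        split_ifs <;> omega
      rw [hν k hk]
      exact_mod_cast hval
    · have hattained : ∀ z : ℤ, z = t j ∨ z = t j - side j →
          ∃ k ≤ m, (z : ℝ) = nuD m t σ k j := by
        rintro z (rfl | rfl)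
        · exact ⟨0, Nat.zero_le _, by rw [hν 0 (Nat.zero_le _), stepD_zero, sub_zero]⟩
        · exact ⟨m, le_rfl, by rw [hν m le_rfl, stepD_self]⟩
      rintro (rfl | rfl)
      · exact hattained _ (by simp only [huj, side]; split_ifs <;> omega)
      · exact_mod_cast hattained (u j - 1) (by simp only [huj, side]; split_ifs <;> omega)
  · rw [← sub_ne_zero, nuD_sub_nuD_pred hk1 hk, hs, depth_rev, side_rev, ne_eq, div_eq_zero_iff,
      Int.cast_eq_zero]
    simp only [two_ne_zero, or_false, side]
    show _ ↔ k = depth j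
    split_ifs <;> omega

lemma abs_nuD_sub_nuD_pred (hd : depth (σ⁻¹ j) ≠ depth j) {k : ℕ} (hk1 : 1 ≤ k) (hk : k ≤ m) :
    |nuD m t σ k j - nuD m t σ ((k : ℤ) - 1) j| =
      if k = depth j ∨ k = depth (σ⁻¹ j) then 1 / 2 else 0 := by
  rw [nuD_sub_nuD_pred hk1 hk]
  simp only [side]
  split_ifs <;> first | omega | norm_num

lemma case3_of_ne (hσ : ∀ x, σ x.rev = (σ x).rev)
    (hu : u j = t j + if (j : ℕ) < σ⁻¹ j then 1 else 0) (h1 : σ j ≠ j) (h2 : σ j ≠ j.rev) :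
    Case3 m t σ u j := by
  have hd : depth (σ⁻¹ j) ≠ depth j := by
    rw [Ne, depth_eq_depth_iff, Equiv.Perm.inv_eq_iff_eq, inv_apply_eq_rev_iff hσ j, eq_comm]
    tauto
  have hjump := fun k (hk1 : 1 ≤ k) (hk : k ≤ m) => abs_nuD_sub_nuD_pred (t := t) hd hk1 hk
  set k₀ := min (depth j) (depth (σ⁻¹ j)) with hk₀
  have hk₀m : k₀ ≤ m := min_le_of_left_le (depth_le j)
  refine ⟨h1, h2, ⟨k₀, hk₀m, ?_⟩, hd.symm, fun k hk1 hk => ?_, fun k hk1 hk hne => ?_⟩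
  · have hval : stepD k₀ (σ⁻¹ j) - stepD k₀ j = 2 * (if (j : ℕ) < σ⁻¹ j then 1 else 0) - 1 := by
      have hj := j.isLt
      simp only [hk₀, stepD, side, depth, Fin.val_rev] at hd ⊢
      split_ifs <;> omega
    rw [nuD_eq hk₀m, hu, ← Int.cast_sub, hval]
    push_cast
    ring
  · show _ ↔ k = depth j ∨ k = depth (σ⁻¹ j)
    rw [← sub_ne_zero, ← abs_ne_zero, hjump k hk1 hk]
    split_ifs <;> simp_all
  · rw [← sub_ne_zero, ← abs_ne_zero, hjump k hk1 hk] at hne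
    rw [hjump k hk1 hk, if_pos (by_contra fun h => hne (if_neg h))]

end Entry

theorem statement13_general (m : ℕ)
    (t : VecZ m) (σ : Equiv.Perm (Fin (2 * m))) (hσ : InSO m σ)
    (u : Fin (2 * m) → ℤ)
    (hu : ∀ j, IsGreatest {x : ℤ | ∃ l : ℕ, l ≤ 2 * m ∧ x = muD m t σ (l : ℤ) j} (u j))
    (j : Fin (2 * m)) :
    (Case1 m t σ j ∧ ¬ Case2 m t σ u j ∧ ¬ Case3 m t σ u j) ∨
    (¬ Case1 m t σ j ∧ Case2 m t σ u j ∧ ¬ Case3 m t σ u j) ∨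
    (¬ Case1 m t σ j ∧ ¬ Case2 m t σ u j ∧ Case3 m t σ u j) := by
  have huj := (hu j).unique isGreatest_muD
  by_cases h1 : σ j = j
  · have hcase1 : Case1 m t σ j := ⟨h1, fun k k' hk hk' => by
      rw [nuD_eq_of_apply_eq_self h1 hk, nuD_eq_of_apply_eq_self h1 hk']⟩
    exact Or.inl ⟨hcase1, fun h => rev_ne_self j (h1 ▸ h.1).symm, fun h => h.1 h1⟩
  by_cases h2 : σ j = j.rev
  · exact Or.inr (Or.inl ⟨fun h => h1 h.1, case2_of_apply_eq_rev hσ.2 huj h2, fun h => h.2.1 h2⟩)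
  · exact Or.inr (Or.inr ⟨fun h => h1 h.1, fun h => h2 h.1, case3_of_ne hσ.2 huj h1 h2⟩)

theorem statement13 (m : ℕ) (hm : 2 ≤ m)
    (t : VecZ m) (σ : Equiv.Perm (Fin (2 * m))) (ht : InXD m t) (hσ : InSO m σ)
    (u : Fin (2 * m) → ℤ)
    (hu : ∀ j, IsGreatest {x : ℤ | ∃ l : ℕ, l ≤ 2 * m ∧ x = muD m t σ (l : ℤ) j} (u j))
    (j : Fin (2 * m)) :
    (Case1 m t σ j ∧ ¬ Case2 m t σ u j ∧ ¬ Case3 m t σ u j) ∨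
    (¬ Case1 m t σ j ∧ Case2 m t σ u j ∧ ¬ Case3 m t σ u j) ∨
    (¬ Case1 m t σ j ∧ ¬ Case2 m t σ u j ∧ Case3 m t σ u j) :=
  statement13_general m t σ hσ u hu j

end TypeD
end

section
/- Let w ∈ W̃_{D_m}, let α̃ := α̃_{i,j;d} be an affine root (so j ∉ {i, i*}, d ∈ ℤ), let 0 ≤ k ≤ m, and suppose that w and s_{α̃}w both satisfy (SP1) at k. (i) If ν_k^w(i), ν_k^w(j), and ⟨α̃, a_k⟩ are all integers, then c_k^{s_{α̃}w} ∈ {c_k^w − 2, c_k^w, c_k^w + 2}. (ii) If at least one of ν_k^w(i), ν_k^w(j), ⟨α̃, a_k⟩ is a half-integer (an element of (1/2)ℤ ∖ ℤ), then c_k^{s_{α̃}w} ∈ {c_k^w − 1, c_k^w, c_k^w + 1}. -/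
open Finset

namespace TypeD

/-! Write `w = t_t σ`. The reflection `s_{α̃} w` differs from `w` by the swaps `i ↔ j`,
`i* ↔ j*` and a translation along `α∨_{i,j}`, so `μ_k` changes only at `i, j, i*, j*`:
`(μ_k(i), μ_k(j))` becomes `(μ_k(i) - n, μ_k(j) + n)` with `n = ⟨α̃, w·ω_k⟩`, and
`(μ_k(j*), μ_k(i*))` is shifted in the same way by `n' = ⟨α̃_{j*,i*;d}, w·ω_k⟩`.
With all entries in `[0, 2]` (by (SP1) for `w` and `s_{α̃} w`), such a shift changes the number
of `2`s in a pair by `±1` if the pair sums to `2` and the shift is odd, and otherwise not at all.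
Finally `n + n' = 2⟨α̃, w·a_k⟩ = 2ν_k^w(i) - 2ν_k^w(j) + 2⟨α̃, a_k⟩`, and a parity count shows
that in case (i) both pairs change or neither does, while in case (ii) they cannot change in
the same direction. -/

lemma isIntVal_intCast_div_two (z : ℤ) : IsIntVal ((z : ℝ) / 2) ↔ Even z := by
  constructor
  · rintro ⟨w, hw⟩
    exact ⟨w, by exact_mod_cast (by linarith : (z : ℝ) = w + w)⟩
  · rintro ⟨w, rfl⟩
    exact ⟨w, by push_cast; ring⟩

lemma isHalfInt_intCast_div_two (z : ℤ) : IsHalfInt ((z : ℝ) / 2) ↔ Odd z := by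
  rw [IsHalfInt, isIntVal_intCast_div_two, Int.not_even_iff_odd]
  exact ⟨And.right, fun h => ⟨⟨z, rfl⟩, h⟩⟩

def pairShiftGain (a b n : ℤ) : ℤ :=
  (if a - n = 2 then 1 else 0) + (if b + n = 2 then 1 else 0) -
    (if a = 2 then 1 else 0) - (if b = 2 then 1 else 0)

/-- The shift preserves `a + b`, which determines the number of `2`s unless `a + b = 2`;
then only an odd shift, between `(1, 1)` and `(0, 2)` or `(2, 0)`, changes it. -/
lemma pairShiftGain_eq {a b n : ℤ} (ha : 0 ≤ a ∧ a ≤ 2) (hb : 0 ≤ b ∧ b ≤ 2)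
    (ha' : 0 ≤ a - n ∧ a - n ≤ 2) (hb' : 0 ≤ b + n ∧ b + n ≤ 2) :
    pairShiftGain a b n = if a + b = 2 ∧ Odd n then (if a = 1 then 1 else -1) else 0 := by
  simp only [pairShiftGain, Int.odd_iff]
  split_ifs <;> omega

lemma pairShiftGain_add_mem {a b c e n n' s : ℤ}
    (ha : 0 ≤ a ∧ a ≤ 2) (hb : 0 ≤ b ∧ b ≤ 2) (hc : 0 ≤ c ∧ c ≤ 2) (he : 0 ≤ e ∧ e ≤ 2)
    (ha' : 0 ≤ a - n ∧ a - n ≤ 2) (hb' : 0 ≤ b + n ∧ b + n ≤ 2)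
    (he' : 0 ≤ e - n' ∧ e - n' ≤ 2) (hc' : 0 ≤ c + n' ∧ c + n' ≤ 2)
    (hsum : n + n' = (a - c + 2) - (b - e + 2) + s) :
    ((Even (a - c + 2) ∧ Even (b - e + 2) ∧ Even s) →
      pairShiftGain a b n + pairShiftGain e c n' ∈ ({-2, 0, 2} : Set ℤ)) ∧
    ((Odd (a - c + 2) ∨ Odd (b - e + 2) ∨ Odd s) →
      pairShiftGain a b n + pairShiftGain e c n' ∈ ({-1, 0, 1} : Set ℤ)) := by
  rw [pairShiftGain_eq ha hb ha' hb', pairShiftGain_eq he hc he' hc']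
  simp only [Int.even_iff, Int.odd_iff, Set.mem_insert_iff, Set.mem_singleton_iff]
  split_ifs <;> omega

lemma ncard_eq_two_sub_ncard_eq_two {ι : Type*} [Fintype ι] {f g : ι → ℤ} (s : Finset ι)
    (h : ∀ l ∉ s, f l = g l) :
    (Set.ncard {l | f l = 2} : ℤ) - Set.ncard {l | g l = 2} =
      ∑ l ∈ s, ((if f l = 2 then 1 else 0) - (if g l = 2 then 1 else 0)) := by
  classical
  simp only [Set.ncard_eq_toFinset_card', Set.toFinset_ofPred, Finset.card_filter]
  push_cast
  rw [← Finset.sum_sub_distrib]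
  refine (Finset.sum_subset (Finset.subset_univ s) fun l _ hl => ?_).symm
  rw [h l hl, sub_self]

section Apartment

variable {m : ℕ}

lemma rev_ne_self_s14 (l : Fin (2 * m)) : l.rev ≠ l := by
  rw [Ne, Fin.ext_iff, Fin.val_rev]
  omega

lemma ne_of_ne_of_ne_rev {i j : Fin (2 * m)} (hji : j ≠ i) (hjir : j ≠ i.rev) :
    i ≠ j ∧ i ≠ i.rev ∧ j ≠ j.rev ∧ i ≠ j.rev ∧ i.rev ≠ j.rev :=
  ⟨hji.symm, (rev_ne_self_s14 i).symm, (rev_ne_self_s14 j).symm,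
    fun h => hjir (by rw [h, Fin.rev_rev]), fun h => hji (Fin.rev_injective h).symm⟩

lemma inApartR_single_sub_single_rev (a : Fin (2 * m)) :
    InApartR m (Pi.single a 1 - Pi.single a.rev 1) := by
  have hzero : ∀ l : Fin (2 * m),
      (Pi.single a 1 - Pi.single a.rev 1 : VecR m) l +
        (Pi.single a 1 - Pi.single a.rev 1 : VecR m) l.rev = 0 := by
    intro l
    simp only [Pi.sub_apply, Pi.single_apply, Fin.rev_eq_iff, Fin.rev_rev]
    ring
  intro l l'
  rw [hzero, hzero]

lemma eq_of_forall_inApartR {p q : Fin (2 * m)} (h : ∀ x, InApartR m x → x p = x q) :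
    p = q := by
  by_contra hpq
  have := h _ (inApartR_single_sub_single_rev q)
  simp only [Pi.sub_apply, Pi.single_apply, if_neg hpq, if_neg (rev_ne_self_s14 q).symm] at this
  split_ifs at this <;> norm_num at this

lemma perm_inv_rev {σ : Equiv.Perm (Fin (2 * m))} (hσ : ∀ l, σ l.rev = (σ l).rev)
    (l : Fin (2 * m)) : σ⁻¹ l.rev = (σ⁻¹ l).rev := by
  rw [Equiv.Perm.inv_eq_iff_eq, hσ]
  simp

lemma InApartR.comp_perm_inv {x : VecR m} {σ : Equiv.Perm (Fin (2 * m))}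
    (hx : InApartR m x) (hσ : ∀ l, σ l.rev = (σ l).rev) :
    InApartR m (fun l => x (σ⁻¹ l)) := by
  intro l l'
  simp only [perm_inv_rev hσ]
  exact hx _ _

def reflPerm (i j : Fin (2 * m)) : Equiv.Perm (Fin (2 * m)) :=
  Equiv.swap i j * Equiv.swap i.rev j.rev

/-- On the apartment the linear part of `s_{α̃_{i,j;d}}` is the permutation `reflPerm i j`. -/
lemma InApartR.sub_mul_corootD {x : VecR m} (hx : InApartR m x) {i j : Fin (2 * m)}
    (hji : j ≠ i) (hjir : j ≠ i.rev) (l : Fin (2 * m)) :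
    x l - (x i - x j) * corootD m i j l = x (reflPerm i j l) := by
  obtain ⟨hij, hiir, hjjr, hijr, hirjr⟩ := ne_of_ne_of_ne_rev hji hjir
  have hsum := hx i j
  by_cases hli : l = i
  · subst hli
    simp [corootD, reflPerm, Equiv.swap_apply_of_ne_of_ne, hij, hiir, hijr]
  by_cases hlj : l = j
  · subst hlj
    simp [corootD, reflPerm, Equiv.swap_apply_of_ne_of_ne, hji, hjir, hjjr]
  by_cases hlir : l = i.rev
  · subst hlir
    simp [corootD, reflPerm, Equiv.swap_apply_of_ne_of_ne, hiir.symm, hjir.symm, hirjr,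
      hijr.symm, hjjr.symm]
    linarith
  by_cases hljr : l = j.rev
  · subst hljr
    simp [corootD, reflPerm, Equiv.swap_apply_of_ne_of_ne, hijr.symm, hjjr.symm, hirjr.symm,
      hiir.symm, hjir.symm]
    linarith
  simp [corootD, reflPerm, Equiv.swap_apply_of_ne_of_ne, hli, hlj, hlir, hljr]

end Apartment

section Reflection

variable {m : ℕ} {t t' : VecZ m} {σ σ' : Equiv.Perm (Fin (2 * m))} {i j : Fin (2 * m)} {d : ℤ}

lemma IsReflOf.translation_apply (h : IsReflOf m i j d t σ t' σ') (l : Fin (2 * m)) :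
    t' l = t l - (t i - t j - d) * corootD m i j l := by
  have h0 := h 0 (fun _ _ => by simp) l
  simp only [actR, Pi.zero_apply, add_zero] at h0
  exact_mod_cast h0

lemma IsReflOf.perm_inv_apply (h : IsReflOf m i j d t σ t' σ')
    (hσ : ∀ l, σ l.rev = (σ l).rev) (hji : j ≠ i) (hjir : j ≠ i.rev) (l : Fin (2 * m)) :
    σ'⁻¹ l = σ⁻¹ (reflPerm i j l) := by
  refine eq_of_forall_inApartR fun x hx => ?_
  have hl := h x hx l
  simp only [actR, h.translation_apply l] at hl
  push_cast at hl
  rw [← (hx.comp_perm_inv hσ).sub_mul_corootD hji hjir l]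
  linarith

/-- `⟨α̃_{i,j;d}, w·ω_k⟩` for `w = t_t σ`. -/
def pairingOmega (m : ℕ) (t : VecZ m) (σ : Equiv.Perm (Fin (2 * m))) (k : ℤ)
    (i j : Fin (2 * m)) (d : ℤ) : ℤ :=
  (t i + omegaD m k (σ⁻¹ i)) - (t j + omegaD m k (σ⁻¹ j)) - d

lemma IsReflOf.muD_eq (h : IsReflOf m i j d t σ t' σ') (ht : InXD m t)
    (hσ : ∀ l, σ l.rev = (σ l).rev) (hji : j ≠ i) (hjir : j ≠ i.rev) (k : ℤ) :
    muD m t' σ' k i = muD m t σ k i - pairingOmega m t σ k i j d ∧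
    muD m t' σ' k j = muD m t σ k j + pairingOmega m t σ k i j d ∧
    muD m t' σ' k j.rev = muD m t σ k j.rev - pairingOmega m t σ k j.rev i.rev d ∧
    muD m t' σ' k i.rev = muD m t σ k i.rev + pairingOmega m t σ k j.rev i.rev d ∧
    ∀ l, l ≠ i → l ≠ j → l ≠ i.rev → l ≠ j.rev → muD m t' σ' k l = muD m t σ k l := by
  obtain ⟨hij, hiir, hjjr, hijr, hirjr⟩ := ne_of_ne_of_ne_rev hji hjir
  have htij := ht i j
  simp only [muD, pairingOmega, h.translation_apply, h.perm_inv_apply hσ hji hjir]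
  refine ⟨?_, ?_, ?_, ?_, fun l hli hlj hlir hljr => ?_⟩
  · simp [corootD, reflPerm, Equiv.swap_apply_of_ne_of_ne, hij, hiir, hijr]
    ring
  · simp [corootD, reflPerm, Equiv.swap_apply_of_ne_of_ne, hji, hjir, hjjr]
    ring
  · simp [corootD, reflPerm, Equiv.swap_apply_of_ne_of_ne, hijr.symm, hjjr.symm, hirjr.symm,
      hiir.symm, hjir.symm]
    linarith
  · simp [corootD, reflPerm, Equiv.swap_apply_of_ne_of_ne, hiir.symm, hjir.symm, hirjr,
      hijr.symm, hjjr.symm]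
    linarith
  · simp [corootD, reflPerm, Equiv.swap_apply_of_ne_of_ne, hli, hlj, hlir, hljr]

lemma IsReflOf.cD_sub_cD (h : IsReflOf m i j d t σ t' σ') (ht : InXD m t)
    (hσ : ∀ l, σ l.rev = (σ l).rev) (hji : j ≠ i) (hjir : j ≠ i.rev) (k : ℤ) :
    (cD m t' σ' k : ℤ) - cD m t σ k =
      pairShiftGain (muD m t σ k i) (muD m t σ k j) (pairingOmega m t σ k i j d) +
      pairShiftGain (muD m t σ k j.rev) (muD m t σ k i.rev)
        (pairingOmega m t σ k j.rev i.rev d) := by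
  obtain ⟨hi, hj, hjr, hir, hother⟩ := h.muD_eq ht hσ hji hjir k
  obtain ⟨hij, hiir, hjjr, hijr, hirjr⟩ := ne_of_ne_of_ne_rev hji hjir
  rw [cD, cD, ncard_eq_two_sub_ncard_eq_two {i, j, j.rev, i.rev} fun l hl => by
    simp only [Finset.mem_insert, Finset.mem_singleton, not_or] at hl
    exact hother l hl.1 hl.2.1 hl.2.2.2 hl.2.2.1]
  rw [Finset.sum_insert (by simp [hij, hijr, hiir]),
    Finset.sum_insert (by simp [hjjr, hjir]), Finset.sum_insert (by simp [hirjr.symm]),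
    Finset.sum_singleton, hi, hj, hjr, hir, pairShiftGain, pairShiftGain]
  ring

end Reflection

lemma SP1.nuD_eq {m : ℕ} {t : VecZ m} {σ : Equiv.Perm (Fin (2 * m))} {k : ℤ}
    (h : SP1 m t σ k) (l : Fin (2 * m)) :
    nuD m t σ k l = ((muD m t σ k l - muD m t σ k l.rev + 2 : ℤ) : ℝ) / 2 := by
  have hl := h.1 l.rev
  rw [Fin.rev_rev] at hl
  rw [nuD, show muD m t σ (-k) l = 2 - muD m t σ k l.rev by omega]
  push_cast
  ring

lemma omegaD_of_le {m k : ℕ} (hk : k ≤ m) (l : Fin (2 * m)) :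
    omegaD m k l = if (l : ℕ) < k then -1 else 0 := by
  have hm : 0 < m := by have := l.isLt; omega
  have hmod : (k : ℤ) % (2 * (m : ℤ)) = k := Int.emod_eq_of_lt (by positivity) (by omega)
  have hdiv : (k : ℤ) / (2 * (m : ℤ)) = 0 := Int.ediv_eq_zero_of_lt (by positivity) (by omega)
  simp only [omegaD, hmod, hdiv, Nat.cast_lt]
  split_ifs <;> rfl

lemma aD_eq_omegaD {m k : ℕ} (hk : k ≤ m) (l : Fin (2 * m)) :
    aD m k l = ((omegaD m k l - omegaD m k l.rev : ℤ) : ℝ) / 2 := by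
  rw [omegaD_of_le hk, omegaD_of_le hk, aD, Fin.val_rev]
  have := l.isLt
  split_ifs <;> first | omega | norm_num

lemma pairingOmega_add_pairingOmega {m : ℕ} (t : VecZ m) (σ : Equiv.Perm (Fin (2 * m)))
    (k : ℤ) (i j : Fin (2 * m)) (d : ℤ) :
    pairingOmega m t σ k i j d + pairingOmega m t σ k j.rev i.rev d =
      (muD m t σ k i - muD m t σ k i.rev + 2) - (muD m t σ k j - muD m t σ k j.rev + 2) +
        (omegaD m k i - omegaD m k i.rev - (omegaD m k j - omegaD m k j.rev) - 2 * d) := by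
  simp only [pairingOmega, muD]
  ring

theorem statement14_general (m : ℕ)
    (t : VecZ m) (σ : Equiv.Perm (Fin (2 * m))) (ht : InXD m t) (hσ : InSO m σ)
    (i j : Fin (2 * m)) (hji : j ≠ i) (hjir : j ≠ i.rev) (d : ℤ)
    (t' : VecZ m) (σ' : Equiv.Perm (Fin (2 * m)))
    (hrefl : IsReflOf m i j d t σ t' σ')
    (k : ℕ) (hk : k ≤ m)
    (h1 : SP1 m t σ (k : ℤ)) (h1' : SP1 m t' σ' (k : ℤ)) :
    ((IsIntVal (nuD m t σ (k : ℤ) i) ∧ IsIntVal (nuD m t σ (k : ℤ) j) ∧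
        IsIntVal (aD m k i - aD m k j - (d : ℝ))) →
      ((cD m t' σ' (k : ℤ) : ℤ) = (cD m t σ (k : ℤ) : ℤ) - 2 ∨
        (cD m t' σ' (k : ℤ) : ℤ) = (cD m t σ (k : ℤ) : ℤ) ∨
        (cD m t' σ' (k : ℤ) : ℤ) = (cD m t σ (k : ℤ) : ℤ) + 2)) ∧
    ((IsHalfInt (nuD m t σ (k : ℤ) i) ∨ IsHalfInt (nuD m t σ (k : ℤ) j) ∨
        IsHalfInt (aD m k i - aD m k j - (d : ℝ))) →
      ((cD m t' σ' (k : ℤ) : ℤ) = (cD m t σ (k : ℤ) : ℤ) - 1 ∨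
        (cD m t' σ' (k : ℤ) : ℤ) = (cD m t σ (k : ℤ) : ℤ) ∨
        (cD m t' σ' (k : ℤ) : ℤ) = (cD m t σ (k : ℤ) : ℤ) + 1)) := by
  obtain ⟨hμi, hμj, hμjr, hμir, -⟩ := hrefl.muD_eq ht hσ.2 hji hjir k
  have hcount := hrefl.cD_sub_cD ht hσ.2 hji hjir k
  have key := pairShiftGain_add_mem (h1.2 i) (h1.2 j) (h1.2 i.rev) (h1.2 j.rev)
    (hμi ▸ h1'.2 i) (hμj ▸ h1'.2 j) (hμjr ▸ h1'.2 j.rev) (hμir ▸ h1'.2 i.rev)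
    (pairingOmega_add_pairingOmega t σ k i j d)
  have hα : aD m k i - aD m k j - d = ((omegaD m k i - omegaD m k i.rev -
      (omegaD m k j - omegaD m k j.rev) - 2 * d : ℤ) : ℝ) / 2 := by
    rw [aD_eq_omegaD hk, aD_eq_omegaD hk]
    push_cast
    ring
  rw [h1.nuD_eq, h1.nuD_eq, hα]
  simp only [isIntVal_intCast_div_two, isHalfInt_intCast_div_two, ← hcount,
    Set.mem_insert_iff, Set.mem_singleton_iff] at key ⊢
  exact ⟨fun hint => by have := key.1 hint; omega, fun hhalf => by have := key.2 hhalf; omega⟩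

theorem statement14 (m : ℕ) (hm : 2 ≤ m)
    (t : VecZ m) (σ : Equiv.Perm (Fin (2 * m))) (ht : InXD m t) (hσ : InSO m σ)
    (i j : Fin (2 * m)) (hji : j ≠ i) (hjir : j ≠ i.rev) (d : ℤ)
    (t' : VecZ m) (σ' : Equiv.Perm (Fin (2 * m))) (ht' : InXD m t') (hσ' : InSO m σ')
    (hrefl : IsReflOf m i j d t σ t' σ')
    (k : ℕ) (hk : k ≤ m)
    (h1 : SP1 m t σ (k : ℤ)) (h1' : SP1 m t' σ' (k : ℤ)) :
    ((IsIntVal (nuD m t σ (k : ℤ) i) ∧ IsIntVal (nuD m t σ (k : ℤ) j) ∧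
        IsIntVal (aD m k i - aD m k j - (d : ℝ))) →
      ((cD m t' σ' (k : ℤ) : ℤ) = (cD m t σ (k : ℤ) : ℤ) - 2 ∨
        (cD m t' σ' (k : ℤ) : ℤ) = (cD m t σ (k : ℤ) : ℤ) ∨
        (cD m t' σ' (k : ℤ) : ℤ) = (cD m t σ (k : ℤ) : ℤ) + 2)) ∧
    ((IsHalfInt (nuD m t σ (k : ℤ) i) ∨ IsHalfInt (nuD m t σ (k : ℤ) j) ∨
        IsHalfInt (aD m k i - aD m k j - (d : ℝ))) →
      ((cD m t' σ' (k : ℤ) : ℤ) = (cD m t σ (k : ℤ) : ℤ) - 1 ∨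
        (cD m t' σ' (k : ℤ) : ℤ) = (cD m t σ (k : ℤ) : ℤ) ∨
        (cD m t' σ' (k : ℤ) : ℤ) = (cD m t σ (k : ℤ) : ℤ) + 1)) :=
  statement14_general m t σ ht hσ i j hji hjir d t' σ' hrefl k hk h1 h1'

end TypeD
end
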